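/- arXiv:2503.19069 — 4 statements merged into one kernel-verified Lean document; each statement's English description precedes it below -/
import Mathlib

section
/- Let G = (V, E) be a connected finite simple graph with |V| ≥ 2. Then the number of spanning trees of G is at most e · (2|E|/|V|)^{|V|−2}, and consequently at most e · (2μ(G))^{|V|−2}, where μ(G) is the maximum subgraph density of G. -/
/-!
Let `N` be an oriented incidence matrix of `G` (`n` vertices, `m` edges) and `A = [N | √t · 1]` the
matrix with one more, constant, column. By Cauchy–Binet, `det (A Aᵀ)` is the sum of the squared
maximal minors of `A`. The minor on the edges of a spanning tree together with the extra column is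
`√t` times a nonzero integer divisible by `n` (adding all rows to one of them turns that row
into `(0, …, 0, n)`), so `det (A Aᵀ) ≥ τ · t · n²`, where `τ` is the number of spanning trees. On
the other hand `A Aᵀ` is positive semidefinite with trace `2m + n t`, so AM–GM on its eigenvalues gives
`det (A Aᵀ) ≤ (d + t)ⁿ` with `d = 2m / n`. Taking `t = d / (n - 1)` and using
`(1 + 1 / (n - 1)) ^ (n - 1) ≤ e` yields `τ ≤ e · dⁿ⁻¹ / n ≤ e · dⁿ⁻²`, and `d ≤ 2 μ(G)`.
-/

open Finset Matrix Equiv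
open scoped Nat

namespace Matrix

variable {m n R : Type*} [Fintype m] [DecidableEq m] [CommRing R]

def detMulTerm (A : Matrix m n R) (B : Matrix n m R) (p : m → n) : R :=
  ∑ σ : Perm m, ((Perm.sign σ : ℤ) : R) * ∏ i, A (σ i) (p i) * B (p i) i

theorem det_mul_eq_sum_detMulTerm [Fintype n] (A : Matrix m n R) (B : Matrix n m R) :
    det (A * B) = ∑ p : m → n, detMulTerm A B p := by
  simp only [det_apply', mul_apply, prod_univ_sum, mul_sum, Fintype.piFinset_univ, detMulTerm]
  exact Finset.sum_comm

theorem detMulTerm_eq_zero_of_not_injective (A : Matrix m n R) (B : Matrix n m R) {p : m → n}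
    (hp : ¬Function.Injective p) : detMulTerm A B p = 0 := by
  obtain ⟨i, j, hpij, hij⟩ : ∃ i j, p i = p j ∧ i ≠ j := by
    simpa [Function.Injective] using hp
  refine sum_involution (fun σ _ => σ * Equiv.swap i j) (fun σ _ => ?_)
    (fun σ _ _ => (not_congr mul_swap_eq_iff).mpr hij) (fun _ _ => mem_univ _)
    fun σ _ => mul_swap_involutive i j σ
  have : ∏ x, A (σ x) (p x) = ∏ x, A ((σ * Equiv.swap i j) x) (p x) :=
    Fintype.prod_equiv (Equiv.swap i j) _ _ (by simp [apply_swap_eq_self hpij])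
  simp [this, Perm.sign_swap hij, prod_mul_distrib]

theorem det_mul_eq_sum_embedding [Fintype n] (A : Matrix m n R) (B : Matrix n m R) :
    det (A * B) = ∑ f : m ↪ n, detMulTerm A B f := by
  classical
  rw [det_mul_eq_sum_detMulTerm, ← sum_subset (subset_univ {p | Function.Injective p})
    fun p _ hp => detMulTerm_eq_zero_of_not_injective A B (by simpa using hp),
    sum_subtype (p := Function.Injective) _ fun _ => mem_filter_univ _]
  exact Fintype.sum_equiv (subtypeInjectiveEquivEmbedding m n) _ _ fun _ => rfl

theorem det_submatrix_mul_det_submatrix (A : Matrix m n R) (B : Matrix n m R) (f : m ↪ n) :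
    det (A.submatrix id f) * det (B.submatrix f id) =
      ∑ g : m ↪ m, detMulTerm A B (g.trans f) := by
  rw [← det_mul, det_mul_eq_sum_embedding]
  rfl

/-- The Cauchy–Binet formula, in which every set of columns is counted once per ordering. -/
theorem factorial_mul_det_mul [Fintype n] (A : Matrix m n R) (B : Matrix n m R) :
    ((Fintype.card m)! : R) * det (A * B) =
      ∑ f : m ↪ n, det (A.submatrix id f) * det (B.submatrix f id) := by
  have hg (g : m ↪ m) : ∑ f : m ↪ n, detMulTerm A B (g.trans f) = det (A * B) := by
    rw [det_mul_eq_sum_embedding]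
    exact Fintype.sum_equiv (embeddingCongr g.equivOfFiniteSelfEmbedding.symm (Equiv.refl n)) _ _
      fun f => rfl
  simp_rw [det_submatrix_mul_det_submatrix, sum_comm (γ := m ↪ n), hg, sum_const, card_univ,
    Fintype.card_embedding_eq, Nat.descFactorial_self, nsmul_eq_mul]

theorem factorial_mul_det_mul_transpose [Fintype n] (A : Matrix m n R) :
    ((Fintype.card m)! : R) * det (A * Aᵀ) = ∑ f : m ↪ n, det (A.submatrix id f) ^ 2 := by
  simp_rw [factorial_mul_det_mul, ← transpose_submatrix, det_transpose, sq]

theorem dvd_det_of_forall_dvd_sum [Nonempty m] (A : Matrix m m R) (d : R)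
    (h : ∀ j, d ∣ ∑ i, A i j) : d ∣ A.det := by
  choose r hr using h
  obtain ⟨i₀⟩ := ‹Nonempty m›
  have hrow : ∑ i, (1 : R) • A i = d • r := by
    ext j
    rw [Finset.sum_apply, Pi.smul_apply, smul_eq_mul, ← hr j]
    simp
  refine ⟨(A.updateRow i₀ r).det, ?_⟩
  rw [← det_updateRow_smul, ← hrow, det_updateRow_sum, one_smul]

end Matrix

theorem Real.prod_le_sum_div_card_pow {ι : Type*} (s : Finset ι) (z : ι → ℝ)
    (hz : ∀ i ∈ s, 0 ≤ z i) : ∏ i ∈ s, z i ≤ ((∑ i ∈ s, z i) / #s) ^ #s := by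
  rcases s.eq_empty_or_nonempty with rfl | hs
  · simp
  have hk : (#s : ℝ) ≠ 0 := by positivity
  have hamgm := Real.geom_mean_le_arith_mean_weighted s (fun _ => (#s : ℝ)⁻¹) z
    (fun _ _ => by positivity) (by simp [hk]) hz
  rw [Real.finsetProd_rpow s z hz, ← mul_sum, inv_mul_eq_div] at hamgm
  calc ∏ i ∈ s, z i = ((∏ i ∈ s, z i) ^ ((#s : ℕ) : ℝ)⁻¹) ^ #s :=
        (Real.rpow_inv_natCast_pow (prod_nonneg hz) hs.card_pos.ne').symm
    _ ≤ _ := by gcongr; exact Real.rpow_nonneg (prod_nonneg hz) _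

theorem Matrix.PosSemidef.det_le_trace_div_card_pow {n : Type*} [Fintype n] [DecidableEq n]
    {A : Matrix n n ℝ} (hA : A.PosSemidef) :
    A.det ≤ (A.trace / Fintype.card n) ^ Fintype.card n := by
  rw [hA.isHermitian.det_eq_prod_eigenvalues, hA.isHermitian.trace_eq_sum_eigenvalues]
  exact_mod_cast Real.prod_le_sum_div_card_pow univ _ fun i _ => hA.eigenvalues_nonneg i

namespace Function.Embedding

theorem exists_range_eq {α β : Type*} [Finite α] [Finite β] {s : Set β}
    (hs : s.ncard = Nat.card α) : ∃ f : α ↪ β, Set.range f = s := by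
  obtain ⟨e⟩ : Nonempty (α ≃ s) := Finite.card_eq.mp (by rw [Nat.card_coe_set_eq, hs])
  refine ⟨e.toEmbedding.trans (Function.Embedding.subtype _), ?_⟩
  rw [coe_trans, Set.range_comp]
  simp

theorem range_toEmbedding_trans {α β : Type*} (σ : Perm α) (f : α ↪ β) :
    Set.range (σ.toEmbedding.trans f) = Set.range f := by
  rw [coe_trans, Set.range_comp]
  simp

theorem factorial_mul_ncard_le_card_range_mem {α β : Type*} [Fintype α] [Finite β]
    (𝒮 : Set (Set β)) (h𝒮 : ∀ s ∈ 𝒮, s.ncard = Fintype.card α) :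
    (Fintype.card α)! * 𝒮.ncard ≤ Nat.card {f : α ↪ β // Set.range f ∈ 𝒮} := by
  choose e he using fun s : 𝒮 =>
    exists_range_eq (α := α) (by rw [h𝒮 s s.2, Nat.card_eq_fintype_card])
  let ψ : Perm α × 𝒮 → {f : α ↪ β // Set.range f ∈ 𝒮} := fun p =>
    ⟨p.1.toEmbedding.trans (e p.2), by rw [range_toEmbedding_trans, he]; exact p.2.2⟩
  have hψ : Function.Injective ψ := by
    rintro ⟨σ, s⟩ ⟨σ', s'⟩ h
    have hs : s = s' := Subtype.ext <| by
      simpa only [ψ, range_toEmbedding_trans, he] using congrArg (fun f => Set.range f.1) h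
    subst hs
    have h' (x : α) : e s (σ x) = e s (σ' x) := congrArg (fun f => f.1 x) h
    simpa using Equiv.ext fun x => (e s).injective (h' x)
  calc (Fintype.card α)! * 𝒮.ncard = Nat.card (Perm α × 𝒮) := by
        rw [Nat.card_prod, Nat.card_perm, Nat.card_eq_fintype_card, Nat.card_coe_set_eq]
    _ ≤ _ := Nat.card_le_card_of_injective ψ hψ

end Function.Embedding

theorem Real.le_exp_one_mul_pow_of_forall_mul_le {τ x : ℝ} {n : ℕ} (hn : 2 ≤ n) (hx : 0 < x)
    (hxn : x ≤ n) (h : ∀ t, 0 ≤ t → τ * t * n ^ 2 ≤ (x + t) ^ n) :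
    τ ≤ Real.exp 1 * x ^ (n - 2) := by
  obtain ⟨k, rfl⟩ : ∃ k, n = k + 2 := ⟨n - 2, by omega⟩
  push_cast at hxn h ⊢
  have hr : 1 + ((k + 1 : ℕ) : ℝ)⁻¹ = (k + 2) / (k + 1) := by push_cast; field_simp; ring
  have hexp : ((k + 2) / (k + 1) : ℝ) ^ (k + 1) ≤ Real.exp 1 := hr ▸ Real.one_add_inv_pow_le_exp
  have hτ : τ * (k + 2) ≤ x ^ (k + 1) * ((k + 2) / (k + 1)) ^ (k + 1) := by
    have hxr : 0 < x * ((k + 2) / (k + 1)) := by positivity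
    have := h (x / (k + 1)) (by positivity)
    rw [show x + x / (k + 1) = x * ((k + 2) / (k + 1)) by field_simp; ring,
      show τ * (x / (k + 1)) * (k + 2) ^ 2 = x * ((k + 2) / (k + 1)) * (τ * (k + 2)) by
        field_simp, pow_succ, mul_comm _ (x * _), mul_pow] at this
    exact le_of_mul_le_mul_left this hxr
  refine le_of_mul_le_mul_right ?_ (by positivity : (0 : ℝ) < k + 2)
  calc τ * (k + 2) ≤ x ^ (k + 1) * Real.exp 1 := hτ.trans (by gcongr)
    _ = Real.exp 1 * x ^ k * x := by ring
    _ ≤ Real.exp 1 * x ^ k * (k + 2) := by gcongr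

theorem Sym2.eq_out_fst_or_eq_out_snd_of_mem {α : Type*} {e : Sym2 α} {x : α} (hx : x ∈ e) :
    x = e.out.1 ∨ x = e.out.2 := by
  rw [← Quot.out_eq e] at hx
  exact Sym2.mem_iff.mp hx

namespace SimpleGraph

variable {V : Type*} (G : SimpleGraph V)

def spanningTrees [Fintype V] : Set (Set (Sym2 V)) :=
  {T | T ⊆ G.edgeSet ∧ T.ncard = Fintype.card V - 1 ∧ (fromEdgeSet T).Connected}

def augCols (T : Set (Sym2 V)) : Set (G.edgeSet ⊕ Unit) :=
  insert (Sum.inr ()) (Sum.inl '' {e | (e : Sym2 V) ∈ T})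

theorem two_mul_ncard_edgeSet_le [Fintype V] : (2 * G.edgeSet.ncard : ℝ) ≤ Fintype.card V ^ 2 := by
  classical
  have hchoose := G.card_edgeFinset_le_card_choose_two
  rw [← Set.ncard_coe_finset, coe_edgeFinset] at hchoose
  have hpow := Nat.choose_le_pow_div (α := ℝ) 2 (Fintype.card V)
  norm_num at hpow
  linarith [(Nat.cast_le (α := ℝ)).mpr hchoose]

theorem ncard_edgeSet_div_card_le_sSup [Fintype V] [Nonempty V] :
    (G.edgeSet.ncard : ℝ) / Fintype.card V ≤ sSup {d : ℝ | ∃ H : G.Subgraph, H.verts.Nonempty ∧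
      d = (H.edgeSet.ncard : ℝ) / (H.verts.ncard : ℝ)} := by
  refine le_csSup ⟨G.edgeSet.ncard, ?_⟩ ⟨⊤, by simp, by simp [Set.ncard_univ]⟩
  rintro _ ⟨H, hH, rfl⟩
  have hv : (1 : ℝ) ≤ H.verts.ncard := by
    exact_mod_cast (Set.ncard_pos (Set.toFinite _)).mpr hH
  calc _ ≤ (H.edgeSet.ncard : ℝ) := div_le_self (by positivity) hv
    _ ≤ _ := by exact_mod_cast Set.ncard_le_ncard H.edgeSet_subset (Set.toFinite _)

variable {G}

theorem out_fst_ne_out_snd (e : G.edgeSet) : (e : Sym2 V).out.1 ≠ (e : Sym2 V).out.2 := by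
  intro h
  apply G.not_isDiag_of_mem_edgeSet e.2
  rw [← Quot.out_eq (e : Sym2 V)]
  exact h

theorem preimage_inl_augCols (T : Set (Sym2 V)) :
    Sum.inl ⁻¹' G.augCols T = Subtype.val ⁻¹' T := by
  ext
  simp [augCols]

theorem ncard_augCols [Finite V] {T : Set (Sym2 V)} (hTG : T ⊆ G.edgeSet) :
    (G.augCols T).ncard = T.ncard + 1 := by
  rw [augCols, Set.ncard_insert_of_notMem (by simp),
    Set.ncard_image_of_injective _ Sum.inl_injective]
  congr 1
  exact Set.ncard_preimage_of_injective_subset_range Subtype.val_injective (by simpa using hTG)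

theorem augCols_injOn : Set.InjOn G.augCols {T | T ⊆ G.edgeSet} := by
  have hrecover {T : Set (Sym2 V)} (hTG : T ⊆ G.edgeSet) :
      Subtype.val '' (Sum.inl ⁻¹' G.augCols T) = T := by
    rw [preimage_inl_augCols, Set.image_preimage_eq_of_subset (by simpa using hTG)]
  intro T hT T' hT' h
  rw [← hrecover hT, h, hrecover hT']

variable (G) [DecidableEq V]

noncomputable def signedIncMatrix (R : Type*) [Ring R] : Matrix V G.edgeSet R :=
  of fun v e => (if v = (e : Sym2 V).out.1 then 1 else 0) - if v = (e : Sym2 V).out.2 then 1 else 0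

noncomputable def augIncMatrix (R : Type*) [Ring R] (γ : R) : Matrix V (G.edgeSet ⊕ Unit) R :=
  fromCols (G.signedIncMatrix R) (of fun _ _ => γ)

variable {G}

theorem map_augIncMatrix {R : Type*} [Ring R] (γ : ℤ) :
    (G.augIncMatrix ℤ γ).map (Int.cast : ℤ → R) = G.augIncMatrix R γ := by
  ext v (e | _) <;> simp only [augIncMatrix, signedIncMatrix, map_apply, fromCols_apply_inl,
    fromCols_apply_inr, of_apply]
  split_ifs <;> simp

variable [Fintype V]

theorem sum_mul_signedIncMatrix {R : Type*} [Ring R] (w : V → R) (e : G.edgeSet) :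
    ∑ v, w v * G.signedIncMatrix R v e = w (e : Sym2 V).out.1 - w (e : Sym2 V).out.2 := by
  simp [signedIncMatrix, mul_sub, sum_sub_distrib]

theorem sum_signedIncMatrix_mul_self {R : Type*} [Ring R] (e : G.edgeSet) :
    ∑ v, G.signedIncMatrix R v e * G.signedIncMatrix R v e = 2 := by
  rw [sum_mul_signedIncMatrix]
  norm_num [signedIncMatrix, out_fst_ne_out_snd e, (out_fst_ne_out_snd e).symm]

theorem det_augIncMatrix_submatrix {R : Type*} [CommRing R] (γ : R) {f : V ↪ G.edgeSet ⊕ Unit}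
    {j₀ : V} (hj₀ : f j₀ = Sum.inr ()) :
    det ((G.augIncMatrix R γ).submatrix id f) = γ * det ((G.augIncMatrix R 1).submatrix id f) := by
  have hcol : (G.augIncMatrix R γ).submatrix id f =
      ((G.augIncMatrix R 1).submatrix id f).updateCol j₀ (γ • fun _ => 1) := by
    ext i j
    rcases eq_or_ne j j₀ with rfl | hj
    · simp [augIncMatrix, hj₀]
    · rcases hfj : f j with e | u
      · simp [updateCol_ne hj, augIncMatrix, hfj]
      · exact absurd (f.injective (hfj.trans hj₀.symm)) hj
  rw [hcol, det_updateCol_smul]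
  congr
  conv_rhs => rw [← updateCol_eq_self ((G.augIncMatrix R 1).submatrix id f) j₀]
  simp [augIncMatrix, hj₀]

theorem card_dvd_det_augIncMatrix_submatrix {R : Type*} [CommRing R] [Nonempty V]
    (f : V ↪ G.edgeSet ⊕ Unit) :
    (Fintype.card V : R) ∣ det ((G.augIncMatrix R 1).submatrix id f) := by
  refine dvd_det_of_forall_dvd_sum _ _ fun j => ?_
  rcases hfj : f j with e | u
  · have hsum := sum_mul_signedIncMatrix (G := G) (fun _ => (1 : R)) e
    simp only [one_mul, sub_self] at hsum
    simp [augIncMatrix, hfj, hsum]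
  · simp [augIncMatrix, hfj]

/-- A left null vector is constant along the edges of `T`, hence constant, and the extra column
forces the constant to vanish. -/
theorem det_augIncMatrix_submatrix_ne_zero {R : Type*} [CommRing R] [IsDomain R] [CharZero R]
    {T : Set (Sym2 V)} (hTG : T ⊆ G.edgeSet) (hT : (fromEdgeSet T).Connected)
    {f : V ↪ G.edgeSet ⊕ Unit} (hf : Set.range f = G.augCols T) :
    det ((G.augIncMatrix R 1).submatrix id f) ≠ 0 := by
  intro h0
  obtain ⟨v, hv0, hv⟩ := exists_vecMul_eq_zero_iff.mpr h0
  have hcol (j : V) : ∑ i, v i * (G.augIncMatrix R 1) i (f j) = 0 := congrFun hv j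
  have hedge : ∀ e ∈ T, ∀ x ∈ e, v x = v e.out.1 := by
    intro e he x hx
    obtain ⟨j, hj⟩ : Sum.inl ⟨e, hTG he⟩ ∈ Set.range f := by simp [hf, augCols, he]
    have h := hcol j
    simp only [hj, augIncMatrix, fromCols_apply_inl, sum_mul_signedIncMatrix] at h
    rcases Sym2.eq_out_fst_or_eq_out_snd_of_mem hx with rfl | rfl
    · rfl
    · exact (sub_eq_zero.mp h).symm
  obtain ⟨i₀⟩ := hT.nonempty
  have hconst (a : V) : v a = v i₀ := by
    obtain ⟨p⟩ := hT.preconnected a i₀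
    induction p with
    | nil => rfl
    | cons hadj _ ih =>
      obtain ⟨hab, -⟩ := (fromEdgeSet_adj T).mp hadj
      exact ((hedge _ hab _ (Sym2.mem_mk_left _ _)).trans
        (hedge _ hab _ (Sym2.mem_mk_right _ _)).symm).trans ih
  obtain ⟨j₀, hj₀⟩ : Sum.inr () ∈ Set.range f := by simp [hf, augCols]
  have h := hcol j₀
  simp only [hj₀, augIncMatrix, fromCols_apply_inr, of_apply, mul_one, hconst, sum_const,
    card_univ, nsmul_eq_mul, mul_eq_zero, Nat.cast_eq_zero] at h
  have hzero : v i₀ = 0 := h.resolve_left (Fintype.card_pos_iff.mpr ⟨i₀⟩).ne'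
  exact hv0 (funext fun a => (hconst a).trans hzero)

theorem card_le_abs_det_augIncMatrix_submatrix {T : Set (Sym2 V)} (hTG : T ⊆ G.edgeSet)
    (hT : (fromEdgeSet T).Connected) {f : V ↪ G.edgeSet ⊕ Unit}
    (hf : Set.range f = G.augCols T) :
    (Fintype.card V : ℤ) ≤ |det ((G.augIncMatrix ℤ 1).submatrix id f)| :=
  haveI := hT.nonempty
  Int.le_of_dvd (abs_pos.mpr (det_augIncMatrix_submatrix_ne_zero hTG hT hf))
    ((dvd_abs _ _).mpr (card_dvd_det_augIncMatrix_submatrix f))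

theorem sq_mul_card_sq_le_sq_det_augIncMatrix_submatrix (γ : ℝ) {T : Set (Sym2 V)}
    (hTG : T ⊆ G.edgeSet) (hT : (fromEdgeSet T).Connected) {f : V ↪ G.edgeSet ⊕ Unit}
    (hf : Set.range f = G.augCols T) :
    γ ^ 2 * Fintype.card V ^ 2 ≤ det ((G.augIncMatrix ℝ γ).submatrix id f) ^ 2 := by
  obtain ⟨j₀, hj₀⟩ : Sum.inr () ∈ Set.range f := by simp [hf, augCols]
  set D := (G.augIncMatrix ℤ 1).submatrix id f
  have hcast : det ((G.augIncMatrix ℝ 1).submatrix id f) = ((det D : ℤ) : ℝ) := by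
    rw [Int.cast_det, ← submatrix_map, map_augIncMatrix, Int.cast_one]
  have hcard : (Fintype.card V : ℝ) ^ 2 ≤ ((det D : ℤ) : ℝ) ^ 2 := by
    rw [sq_le_sq, abs_of_nonneg (by positivity)]
    exact_mod_cast card_le_abs_det_augIncMatrix_submatrix hTG hT hf
  rw [det_augIncMatrix_submatrix γ hj₀, hcast, mul_pow]
  gcongr

variable [DecidableRel G.Adj]

theorem trace_augIncMatrix_mul_transpose {R : Type*} [CommRing R] (γ : R) :
    trace (G.augIncMatrix R γ * (G.augIncMatrix R γ)ᵀ) =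
      2 * Fintype.card G.edgeSet + Fintype.card V * γ ^ 2 := by
  simp only [trace, Matrix.diag, mul_apply, transpose_apply]
  rw [sum_comm, Fintype.sum_sum_type]
  simp [augIncMatrix, sum_signedIncMatrix_mul_self, sq, mul_comm]

theorem det_augIncMatrix_mul_transpose_le {t : ℝ} (ht : 0 ≤ t) :
    det (G.augIncMatrix ℝ √t * (G.augIncMatrix ℝ √t)ᵀ) ≤
      (2 * G.edgeSet.ncard / Fintype.card V + t) ^ Fintype.card V := by
  have hpsd : (G.augIncMatrix ℝ √t * (G.augIncMatrix ℝ √t)ᵀ).PosSemidef := by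
    simpa using posSemidef_self_mul_conjTranspose (G.augIncMatrix ℝ √t)
  refine hpsd.det_le_trace_div_card_pow.trans_eq ?_
  rw [trace_augIncMatrix_mul_transpose, Real.sq_sqrt ht, ← Nat.card_coe_set_eq,
    Nat.card_eq_fintype_card]
  rcases eq_or_ne (Fintype.card V) 0 with hV | hV
  · simp [hV]
  · field_simp

theorem ncard_spanningTrees_mul_le {t : ℝ} (ht : 0 ≤ t) :
    G.spanningTrees.ncard * t * Fintype.card V ^ 2 ≤
      (2 * G.edgeSet.ncard / Fintype.card V + t) ^ Fintype.card V := by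
  set n := Fintype.card V
  set A := G.augIncMatrix ℝ √t
  set 𝒮 := G.augCols '' G.spanningTrees
  have h𝒮 : ∀ s ∈ 𝒮, s.ncard = n := by
    rintro _ ⟨T, ⟨hTG, hTcard, hT⟩, rfl⟩
    have : 0 < n := Fintype.card_pos_iff.mpr hT.nonempty
    rw [ncard_augCols hTG, hTcard]
    omega
  have hτ : 𝒮.ncard = G.spanningTrees.ncard := (augCols_injOn.mono fun _ hT => hT.1).ncard_image
  have hminor (f : V ↪ G.edgeSet ⊕ Unit) (hf : Set.range f ∈ 𝒮) :
      t * n ^ 2 ≤ det (A.submatrix id f) ^ 2 := by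
    obtain ⟨T, ⟨hTG, -, hT⟩, hfT⟩ := hf
    simpa [Real.sq_sqrt ht] using
      sq_mul_card_sq_le_sq_det_augIncMatrix_submatrix √t hTG hT hfT.symm
  have hsum : (n ! : ℝ) * (G.spanningTrees.ncard * (t * n ^ 2)) ≤ n ! * det (A * Aᵀ) := by
    classical
    rw [factorial_mul_det_mul_transpose, ← hτ, ← mul_assoc]
    calc (n ! * 𝒮.ncard : ℝ) * (t * n ^ 2)
        ≤ Nat.card {f : V ↪ G.edgeSet ⊕ Unit // Set.range f ∈ 𝒮} * (t * n ^ 2) := by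
          gcongr
          exact_mod_cast Function.Embedding.factorial_mul_ncard_le_card_range_mem 𝒮 h𝒮
      _ = #{f : V ↪ G.edgeSet ⊕ Unit | Set.range f ∈ 𝒮} • (t * n ^ 2) := by
          rw [Nat.card_eq_fintype_card, Fintype.card_subtype, nsmul_eq_mul]
      _ ≤ ∑ f ∈ {f : V ↪ G.edgeSet ⊕ Unit | Set.range f ∈ 𝒮}, det (A.submatrix id f) ^ 2 :=
          card_nsmul_le_sum _ _ _ fun f hf => hminor f (mem_filter.mp hf).2
      _ ≤ ∑ f : V ↪ G.edgeSet ⊕ Unit, det (A.submatrix id f) ^ 2 :=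
          sum_le_univ_sum_of_nonneg fun _ => sq_nonneg _
  calc _ = G.spanningTrees.ncard * (t * n ^ 2) := by ring
    _ ≤ det (A * Aᵀ) := le_of_mul_le_mul_left hsum (by positivity)
    _ ≤ _ := det_augIncMatrix_mul_transpose_le ht

end SimpleGraph

theorem card_spanningTrees_le_general {n : ℕ} (G : SimpleGraph (Fin n)) (hn : 2 ≤ n) :
    let ST : Set (Set (Sym2 (Fin n))) :=
      {T | T ⊆ G.edgeSet ∧ T.ncard = n - 1 ∧ (SimpleGraph.fromEdgeSet T).Connected}
    let μ : ℝ := sSup {d : ℝ | ∃ H : G.Subgraph, H.verts.Nonempty ∧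
      d = (H.edgeSet.ncard : ℝ) / (H.verts.ncard : ℝ)}
    (ST.ncard : ℝ) ≤ Real.exp 1 * (2 * (G.edgeSet.ncard : ℝ) / (n : ℝ)) ^ (n - 2) ∧
    (ST.ncard : ℝ) ≤ Real.exp 1 * (2 * μ) ^ (n - 2) := by
  intro ST μ
  classical
  have hST : ST = G.spanningTrees := by simp [ST, SimpleGraph.spanningTrees]
  have hbound : (ST.ncard : ℝ) ≤ Real.exp 1 * (2 * G.edgeSet.ncard / n) ^ (n - 2) := by
    rcases ST.eq_empty_or_nonempty with hempty | ⟨T, hTG, hTcard, -⟩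
    · rw [hempty, Set.ncard_empty, Nat.cast_zero]
      positivity
    have hm : (1 : ℝ) ≤ G.edgeSet.ncard := by
      have := hTcard ▸ Set.ncard_le_ncard hTG
      exact_mod_cast (by omega : 1 ≤ G.edgeSet.ncard)
    have hxn : 2 * G.edgeSet.ncard / n ≤ (n : ℝ) := by
      rw [div_le_iff₀ (by positivity), ← sq]
      simpa using G.two_mul_ncard_edgeSet_le
    refine Real.le_exp_one_mul_pow_of_forall_mul_le hn (by positivity) hxn fun t ht => ?_
    simpa [hST] using G.ncard_spanningTrees_mul_le ht
  refine ⟨hbound, hbound.trans ?_⟩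
  have : Nonempty (Fin n) := ⟨⟨0, by omega⟩⟩
  have hμ : G.edgeSet.ncard / n ≤ μ := by simpa using G.ncard_edgeSet_div_card_le_sSup
  gcongr
  rw [mul_div_assoc]
  linarith

/-- Grone–Merris type bound: a connected graph `G` on `n ≥ 2` vertices has at most
`e · (2|E|/n)^(n-2)` spanning trees, and consequently at most `e · (2 μ(G))^(n-2)`,
where `μ(G)` is the maximum subgraph density of `G`. -/
theorem card_spanningTrees_le {n : ℕ} (G : SimpleGraph (Fin n)) (hconn : G.Connected)
    (hn : 2 ≤ n) :
    let ST : Set (Set (Sym2 (Fin n))) :=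
      {T | T ⊆ G.edgeSet ∧ T.ncard = n - 1 ∧ (SimpleGraph.fromEdgeSet T).Connected}
    let μ : ℝ := sSup {d : ℝ | ∃ H : G.Subgraph, H.verts.Nonempty ∧
      d = (H.edgeSet.ncard : ℝ) / (H.verts.ncard : ℝ)}
    (ST.ncard : ℝ) ≤ Real.exp 1 * (2 * (G.edgeSet.ncard : ℝ) / (n : ℝ)) ^ (n - 2) ∧
    (ST.ncard : ℝ) ≤ Real.exp 1 * (2 * μ) ^ (n - 2) :=
  card_spanningTrees_le_general G hn
end

section
/- Let Γ be a finite simple graph with no isolated vertices, k vertices, maximum degree d, and minimum vertex cover number τ. Let Γ' be a fixed copy of Γ in the complete graph K_n with k < n, and let H be a graph with no isolated vertices, ℓ vertices and m connected components that is isomorphic to some subgraph of Γ'. If H_U is a uniformly random copy of H in K_n, then P[H_U ⊆ Γ'] ≤ (2τ)^m · d^{ℓ−m} / (n−k)^ℓ. -/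
/-!
Every copy of `H` in `K_n` is the image of the same number of embeddings of `supp H` into
`[n]`, so the probability equals the fraction of the `n (n-1) ⋯ (n-ℓ+1) ≥ (n-k)^ℓ` embeddings
whose image lies in `Γ` (if there is one at all, then `ℓ ≤ k`). Such an embedding is a graph
homomorphism `H[supp H] → Γ`, and homomorphisms are counted by placing vertices one at a time:
the first edge of each component goes to one of the `2 e(Γ) ≤ 2τd` darts of `Γ`, and every
further vertex, chosen adjacent to an already placed one, to one of at most `d` neighbours.
-/

open SimpleGraph Finset
open scoped Classical

namespace SimpleGraph

lemma ncard_neighborSet_eq_degree {V : Type*} (G : SimpleGraph V) [Fintype V] (v : V) :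
    (G.neighborSet v).ncard = G.degree v := by
  rw [Set.ncard_eq_toFinset_card', ← neighborFinset_def, card_neighborFinset_eq_degree]

section Homomorphisms

variable {V W : Type*} [Fintype V] [Fintype W] {G : SimpleGraph V} {Γ : SimpleGraph W}

noncomputable def homExtensions (G : SimpleGraph V) (Γ : SimpleGraph W) (P : Finset V)
    (g : V → W) : Finset (V → W) :=
  {f | (∀ u v, G.Adj u v → Γ.Adj (f u) (f v)) ∧ ∀ x ∈ P, f x = g x}

noncomputable def freeComponents (G : SimpleGraph V) (P : Finset V) :
    Finset G.ConnectedComponent :=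
  univ \ P.image G.connectedComponentMk

lemma card_freeComponents_le (G : SimpleGraph V) (P : Finset V) :
    #(G.freeComponents P) ≤ #Pᶜ := by
  refine (card_le_card fun c hc ↦ ?_).trans (card_image_le (f := G.connectedComponentMk))
  rw [freeComponents, mem_sdiff] at hc
  obtain ⟨v, rfl⟩ := c.exists_rep
  exact mem_image_of_mem _ (mem_compl.2 fun hv ↦ hc.2 (mem_image_of_mem _ hv))

lemma freeComponents_insert_of_adj {P : Finset V} {w v : V} (hw : w ∈ P) (h : G.Adj w v) :
    G.freeComponents (insert v P) = G.freeComponents P := by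
  rw [freeComponents, image_insert, insert_eq_of_mem, freeComponents]
  exact ConnectedComponent.eq.2 h.reachable ▸ mem_image_of_mem _ hw

lemma freeComponents_insert_insert_of_adj {P : Finset V} {r r' : V} (h : G.Adj r r') :
    G.freeComponents (insert r' (insert r P)) =
      (G.freeComponents P).erase (G.connectedComponentMk r) := by
  rw [freeComponents, image_insert, image_insert, ← ConnectedComponent.eq.2 h.reachable,
    insert_idem, sdiff_insert, freeComponents]

lemma connectedComponentMk_mem_freeComponents {P : Finset V}
    (hP : ∀ w ∈ P, ∀ v, G.Adj w v → v ∈ P) {r : V} (hr : r ∉ P) :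
    G.connectedComponentMk r ∈ G.freeComponents P := by
  simp only [freeComponents, mem_sdiff, mem_univ, mem_image, true_and, not_exists, not_and]
  intro w hw hwr
  obtain ⟨d, -, hd, hd'⟩ := (ConnectedComponent.exact hwr).some.exists_boundary_dart _ hw hr
  exact hd' (hP _ hd _ d.adj)

lemma mem_homExtensions_insert {P : Finset V} {f g : V → W} (hf : f ∈ homExtensions G Γ P g)
    (v : V) : f ∈ homExtensions G Γ (insert v P) (Function.update g v (f v)) := by
  simp only [homExtensions, mem_filter, mem_univ, true_and, mem_insert,
    forall_eq_or_imp, Function.update_self] at hf ⊢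
  refine ⟨hf.1, fun x hx ↦ ?_⟩
  rcases eq_or_ne x v with rfl | hxv
  · simp
  · rw [Function.update_of_ne hxv, hf.2 x hx]

lemma card_homExtensions_le_one {P : Finset V} (hP : ∀ v, v ∈ P) (g : V → W) :
    #(homExtensions G Γ P g) ≤ 1 :=
  card_le_one.2 fun f hf f' hf' ↦ funext fun v ↦ by
    simp only [homExtensions, mem_filter] at hf hf'
    rw [hf.2.2 v (hP v), hf'.2.2 v (hP v)]

lemma card_homExtensions_le_mul_of_adj {d B : ℕ} (hd : ∀ x, Γ.degree x ≤ d) {P : Finset V}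
    {g : V → W} {w v : V} (hw : w ∈ P) (h : G.Adj w v)
    (hB : ∀ y, #(homExtensions G Γ (insert v P) (Function.update g v y)) ≤ B) :
    #(homExtensions G Γ P g) ≤ d * B := by
  calc #(homExtensions G Γ P g)
      ≤ #((Γ.neighborFinset (g w)).biUnion
          fun y ↦ homExtensions G Γ (insert v P) (Function.update g v y)) := by
        refine card_le_card fun f hf ↦ mem_biUnion.2 ⟨f v, ?_, mem_homExtensions_insert hf v⟩
        simp only [homExtensions, mem_filter] at hf
        simpa [← hf.2.2 w hw] using hf.2.1 w v h
    _ ≤ Γ.degree (g w) * B := card_biUnion_le_card_mul _ _ _ fun y _ ↦ hB y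
    _ ≤ d * B := Nat.mul_le_mul_right _ (hd _)

lemma card_homExtensions_le_card_dart_mul {B : ℕ} {P : Finset V} {g : V → W} {r r' : V}
    (h : G.Adj r r') (hB : ∀ x y, #(homExtensions G Γ (insert r' (insert r P))
      (Function.update (Function.update g r x) r' y)) ≤ B) :
    #(homExtensions G Γ P g) ≤ Fintype.card Γ.Dart * B := by
  calc #(homExtensions G Γ P g)
      ≤ #((univ : Finset Γ.Dart).biUnion fun e ↦ homExtensions G Γ (insert r' (insert r P))
          (Function.update (Function.update g r e.fst) r' e.snd)) := by
        refine card_le_card fun f hf ↦ mem_biUnion.2 ⟨⟨(f r, f r'), ?_⟩, mem_univ _,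
          mem_homExtensions_insert (mem_homExtensions_insert hf r) r'⟩
        simp only [homExtensions, mem_filter] at hf
        exact hf.2.1 r r' h
    _ ≤ Fintype.card Γ.Dart * B := card_biUnion_le_card_mul _ _ _ fun e _ ↦ hB _ _

lemma card_compl_insert_add_one {P : Finset V} {v : V} (hv : v ∉ P) :
    #(insert v P)ᶜ + 1 = #Pᶜ := by
  rw [compl_insert, card_erase_add_one (mem_compl.2 hv)]

noncomputable def extensionBound (G : SimpleGraph V) (a d : ℕ) (P : Finset V) : ℕ :=
  a ^ #(G.freeComponents P) * d ^ (#Pᶜ - #(G.freeComponents P))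

lemma extensionBound_eq_one {a d : ℕ} {P : Finset V} (hP : ∀ v, v ∈ P) :
    G.extensionBound a d P = 1 := by
  have hc := card_freeComponents_le G P
  have hPc : #Pᶜ = 0 := by simpa [eq_empty_iff_forall_notMem] using hP
  simp [extensionBound, hPc, show #(G.freeComponents P) = 0 by omega]

lemma extensionBound_eq_mul_of_adj {a d : ℕ} {P : Finset V} {w v : V} (hw : w ∈ P)
    (h : G.Adj w v) (hv : v ∉ P) :
    G.extensionBound a d P = d * G.extensionBound a d (insert v P) := by
  have hc := card_freeComponents_le G (insert v P)
  have ht := card_compl_insert_add_one hv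
  rw [freeComponents_insert_of_adj hw h] at hc
  rw [extensionBound, extensionBound, freeComponents_insert_of_adj hw h, ← ht,
    show #(insert v P)ᶜ + 1 - #(G.freeComponents P) =
      #(insert v P)ᶜ - #(G.freeComponents P) + 1 by omega]
  ring

lemma extensionBound_eq_mul_of_fresh_adj {a d : ℕ} {P : Finset V}
    (hP : ∀ w ∈ P, ∀ v, G.Adj w v → v ∈ P) {r r' : V} (hr : r ∉ P) (h : G.Adj r r') :
    G.extensionBound a d P = a * d * G.extensionBound a d (insert r' (insert r P)) := by
  have hr' : r' ∉ insert r P := by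
    simpa [h.ne.symm] using fun hr' ↦ hr (hP _ hr' _ h.symm)
  have ht : #(insert r' (insert r P))ᶜ + 2 = #Pᶜ := by
    rw [← card_compl_insert_add_one hr, ← card_compl_insert_add_one hr']
  have hfree : #(G.freeComponents (insert r' (insert r P))) + 1 = #(G.freeComponents P) := by
    rw [freeComponents_insert_insert_of_adj h,
      card_erase_add_one (connectedComponentMk_mem_freeComponents hP hr)]
  have hc := card_freeComponents_le G (insert r' (insert r P))
  rw [extensionBound, extensionBound, ← hfree, ← ht,
    show #(insert r' (insert r P))ᶜ + 2 - (#(G.freeComponents (insert r' (insert r P))) + 1) =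
      #(insert r' (insert r P))ᶜ - #(G.freeComponents (insert r' (insert r P))) + 1 by omega]
  ring

theorem card_homExtensions_le {a d : ℕ} (hG : ∀ v, ∃ w, G.Adj v w) (hd : ∀ x, Γ.degree x ≤ d)
    (ha : Fintype.card Γ.Dart ≤ a * d) (P : Finset V) (g : V → W) :
    #(homExtensions G Γ P g) ≤ G.extensionBound a d P := by
  induction ht : #Pᶜ using Nat.strong_induction_on generalizing P g with
  | _ t ih =>
  by_cases hP : ∀ v, v ∈ P
  · exact (extensionBound_eq_one hP).symm ▸ card_homExtensions_le_one hP g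
  push Not at hP
  by_cases hclosed : ∀ w ∈ P, ∀ v, G.Adj w v → v ∈ P
  · -- no edge leaves `P`: pin both ends of an edge of a component disjoint from `P`
    obtain ⟨r, hr⟩ := hP
    obtain ⟨r', h⟩ := hG r
    have hlt : #(insert r' (insert r P))ᶜ < t := by
      have := card_compl_insert_add_one hr
      have := card_le_card (compl_subset_compl.2 (subset_insert r' (insert r P)))
      omega
    rw [extensionBound_eq_mul_of_fresh_adj hclosed hr h]
    exact (card_homExtensions_le_card_dart_mul h fun x y ↦ ih _ hlt _ _ rfl).trans
      (Nat.mul_le_mul_right _ ha)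
  · push Not at hclosed
    obtain ⟨w, hw, v, h, hv⟩ := hclosed
    have hlt : #(insert v P)ᶜ < t := by
      have := card_compl_insert_add_one hv
      omega
    rw [extensionBound_eq_mul_of_adj hw h hv]
    exact card_homExtensions_le_mul_of_adj hd hw h fun y ↦ ih _ hlt _ _ rfl

theorem card_hom_le {a d : ℕ} (hG : ∀ v, ∃ w, G.Adj v w) (hd : ∀ x, Γ.degree x ≤ d)
    (ha : Fintype.card Γ.Dart ≤ a * d) :
    Nat.card (G →g Γ) ≤
      a ^ Nat.card G.ConnectedComponent * d ^ (Nat.card V - Nat.card G.ConnectedComponent) := by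
  rcases isEmpty_or_nonempty (G →g Γ) with h | ⟨⟨φ⟩⟩
  · simp
  calc Nat.card (G →g Γ) ≤ #(homExtensions G Γ ∅ φ) := by
        rw [← Nat.card_eq_finsetCard]
        refine Nat.card_le_card_of_injective (fun ψ ↦ ⟨ψ, ?_⟩)
          fun ψ ψ' h ↦ DFunLike.coe_injective (Subtype.ext_iff.1 h)
        simpa [homExtensions] using fun u v h ↦ ψ.map_adj h
    _ ≤ _ := by
        simpa [extensionBound, freeComponents, Nat.card_eq_fintype_card] using
          card_homExtensions_le hG hd ha ∅ φ

lemma IsVertexCover.card_dart_le {U : Finset W} (hU : Γ.IsVertexCover U) {d : ℕ}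
    (hd : ∀ x, Γ.degree x ≤ d) : Fintype.card Γ.Dart ≤ 2 * #U * d := by
  have hE : Γ.edgeFinset ⊆ U.biUnion fun x ↦ Γ.incidenceFinset x := by
    intro e he
    induction e with
    | h x y =>
      rw [mem_edgeFinset, mem_edgeSet] at he
      rcases hU he with hx | hy
      · exact mem_biUnion.2
          ⟨x, hx, (mem_incidenceFinset _ _ _).2 (Γ.mk'_mem_incidenceSet_left_iff.2 he)⟩
      · exact mem_biUnion.2
          ⟨y, hy, (mem_incidenceFinset _ _ _).2 (Γ.mk'_mem_incidenceSet_right_iff.2 he)⟩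
  rw [dart_card_eq_twice_card_edges, mul_assoc]
  refine Nat.mul_le_mul_left 2 ((card_le_card hE).trans (card_biUnion_le_card_mul _ _ _ ?_))
  intro x _
  rw [card_incidenceFinset_eq_degree]
  exact hd x

lemma exists_isVertexCover_card_eq_sInf (Γ : SimpleGraph W) :
    ∃ U : Finset W, Γ.IsVertexCover U ∧
      #U = sInf {c | ∃ U : Finset W, #U = c ∧ ∀ e ∈ Γ.edgeSet, ∃ v ∈ U, v ∈ e} := by
  obtain ⟨U, hU, hcover⟩ := Nat.sInf_mem (s := {c | ∃ U : Finset W, #U = c ∧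
    ∀ e ∈ Γ.edgeSet, ∃ v ∈ U, v ∈ e}) ⟨_, univ, rfl, fun e _ ↦ ⟨_, mem_univ _, e.out_fst_mem⟩⟩
  refine ⟨U, fun x y hxy ↦ ?_, hU⟩
  obtain ⟨v, hv, hxy'⟩ := hcover s(x, y) hxy
  rcases Sym2.mem_iff.1 hxy' with rfl | rfl <;> simp [hv]

end Homomorphisms

section Copies

variable {V W : Type*}

def copyAlong (H : SimpleGraph V) (f : H.support ↪ W) : SimpleGraph W :=
  (H.induce H.support).map f

lemma Iso.map_eq {G : SimpleGraph V} {G' : SimpleGraph W} (j : G ≃g G') : G.map j = G' := by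
  ext x y
  obtain ⟨x, rfl⟩ := j.surjective x
  obtain ⟨y, rfl⟩ := j.surjective y
  exact (map_adj_apply (f := j.toEquiv.toEmbedding)).trans j.map_adj_iff.symm

lemma copyAlong_trans {H : SimpleGraph V} (f : H.support ↪ W) {W' : Type*} {G : SimpleGraph W}
    {G' : SimpleGraph W'} (j : G ≃g G') (hf : H.copyAlong f = G) :
    H.copyAlong (f.trans j.toEquiv.toEmbedding) = G' := by
  rw [copyAlong, Function.Embedding.coe_trans, ← map_map, ← copyAlong, hf]
  exact j.map_eq

lemma copyAlong_subtype (H : SimpleGraph V) :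
    H.copyAlong (Function.Embedding.subtype _) = H :=
  spanningCoe_induce_support (G := H)

lemma exists_adj_induce_support (H : SimpleGraph V) (v : H.support) :
    ∃ w, (H.induce H.support).Adj v w := by
  obtain ⟨w, hw⟩ := v.2
  exact ⟨⟨w, v, hw.symm⟩, hw⟩

lemma card_fiber_copyAlong_congr {H : SimpleGraph V} {G G' : SimpleGraph W} (j : G ≃g G') :
    Nat.card {f : H.support ↪ W // H.copyAlong f = G} =
      Nat.card {f : H.support ↪ W // H.copyAlong f = G'} :=
  Nat.card_congr
    { toFun f := ⟨f.1.trans j.toEquiv.toEmbedding, copyAlong_trans _ j f.2⟩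
      invFun f := ⟨f.1.trans j.symm.toEquiv.toEmbedding, copyAlong_trans _ j.symm f.2⟩
      left_inv f := by ext; simp
      right_inv f := by ext; simp }

variable [Fintype V]

lemma card_copyAlong_le_le_card_hom [Finite W] (H : SimpleGraph V) (Γ : SimpleGraph W) :
    Nat.card {f : H.support ↪ W // H.copyAlong f ≤ Γ} ≤ Nat.card (H.induce H.support →g Γ) :=
  Nat.card_le_card_of_injective
    (fun f ↦ (Hom.comap f.1 Γ).comp (Hom.ofLE ((map_le_iff_le_comap _ _ _).1 f.2)))
    fun _ _ h ↦ Subtype.ext <| DFunLike.coe_injective (congrArg DFunLike.coe h :)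

lemma exists_perm_copyAlong_eq_map (H : SimpleGraph V) (f : H.support ↪ V) :
    ∃ σ : Equiv.Perm V, H.copyAlong f = H.map σ := by
  let σ := (Equiv.ofInjective f f.injective).extendSubtype
  refine ⟨σ, ?_⟩
  have : ⇑f = σ ∘ Subtype.val := funext fun v ↦ by
    simp [σ, Equiv.extendSubtype_apply_of_mem _ _ v.2]
  rw [copyAlong, this, ← map_map]
  exact congrArg _ H.copyAlong_subtype

lemma nonempty_copyAlong_iso (H : SimpleGraph V) (f : H.support ↪ V) :
    Nonempty (H.copyAlong f ≃g H) := by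
  obtain ⟨σ, hσ⟩ := H.exists_perm_copyAlong_eq_map f
  exact hσ ▸ ⟨(Iso.map σ H).symm⟩

lemma ncard_support_le_of_copyAlong_le {H Γ : SimpleGraph V} {f : H.support ↪ V}
    (hf : H.copyAlong f ≤ Γ) : H.support.ncard ≤ Γ.support.ncard := by
  obtain ⟨σ, hσ⟩ := H.exists_perm_copyAlong_eq_map f
  rw [hσ, ← Equiv.coe_toEmbedding] at hf
  have := Set.ncard_le_ncard (support_mono hf)
  rwa [support_map, Set.ncard_image_of_injective _ σ.toEmbedding.injective] at this

theorem card_copies_mul_card_fiber (H : SimpleGraph V) (p : SimpleGraph V → Prop) :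
    Nat.card {G // Nonempty (G ≃g H) ∧ p G} * Nat.card {f : H.support ↪ V // H.copyAlong f = H} =
      Nat.card {f : H.support ↪ V // p (H.copyAlong f)} := by
  simp only [Nat.card_eq_fintype_card, Fintype.card_subtype]
  rw [card_eq_sum_card_fiberwise (f := H.copyAlong) (s := {f | p (H.copyAlong f)})
    (t := {G | Nonempty (G ≃g H) ∧ p G})
    fun f hf ↦ by simpa using ⟨H.nonempty_copyAlong_iso f, (mem_filter.1 hf).2⟩]
  refine (sum_const_nat fun G hG ↦ ?_).symm
  obtain ⟨⟨j⟩, hG⟩ := (mem_filter.1 hG).2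
  have hfiber := card_fiber_copyAlong_congr (H := H) j
  simp only [Nat.card_eq_fintype_card, Fintype.card_subtype] at hfiber
  rw [filter_filter, ← hfiber]
  congr 1
  ext f
  simp only [mem_filter, mem_univ, true_and]
  exact ⟨And.right, fun h ↦ ⟨h ▸ hG, h⟩⟩

theorem card_copies_div_card_copies (H : SimpleGraph V) (p : SimpleGraph V → Prop) :
    (Nat.card {G // Nonempty (G ≃g H) ∧ p G} : ℝ) /
        Nat.card {G : SimpleGraph V // Nonempty (G ≃g H)} =
      Nat.card {f : H.support ↪ V // p (H.copyAlong f)} / Nat.card (H.support ↪ V) := by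
  have hfiber : (Nat.card {f : H.support ↪ V // H.copyAlong f = H} : ℝ) ≠ 0 :=
    Nat.cast_ne_zero.2 <| Nat.card_ne_zero.2
      ⟨⟨⟨Function.Embedding.subtype _, H.copyAlong_subtype⟩⟩, inferInstance⟩
  have hall : Nat.card {G : SimpleGraph V // Nonempty (G ≃g H)} *
      Nat.card {f : H.support ↪ V // H.copyAlong f = H} = Nat.card (H.support ↪ V) := by
    simpa using H.card_copies_mul_card_fiber fun _ ↦ True
  rw [← mul_div_mul_right _ _ hfiber, ← Nat.cast_mul, ← Nat.cast_mul,
    card_copies_mul_card_fiber, hall]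

end Copies

end SimpleGraph

theorem prob_random_copy_subset_general {n k ℓ m d τ : ℕ} (Γ H : SimpleGraph (Fin n))
    (hk : Γ.support.ncard = k) (hkn : k < n)
    (hd : ∀ v, (Γ.neighborSet v).ncard ≤ d)
    (hτ : τ = sInf {c : ℕ | ∃ U : Finset (Fin n), U.card = c ∧
      ∀ e ∈ Γ.edgeSet, ∃ v ∈ U, v ∈ e})
    (hℓ : H.support.ncard = ℓ)
    (hm : m = Nat.card (H.induce H.support).ConnectedComponent) :
    (Nat.card {H' : SimpleGraph (Fin n) // Nonempty (H' ≃g H) ∧ H' ≤ Γ} : ℝ) /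
      (Nat.card {H' : SimpleGraph (Fin n) // Nonempty (H' ≃g H)} : ℝ) ≤
    ((2 * τ : ℝ) ^ m * (d : ℝ) ^ (ℓ - m)) / ((n : ℝ) - (k : ℝ)) ^ ℓ := by
  obtain ⟨U, hU, rfl⟩ := hτ ▸ Γ.exists_isVertexCover_card_eq_sInf
  have hdeg (v) : Γ.degree v ≤ d := Γ.ncard_neighborSet_eq_degree v ▸ hd v
  have hhom : Nat.card {f : H.support ↪ Fin n // H.copyAlong f ≤ Γ} ≤
      (2 * #U) ^ m * d ^ (ℓ - m) := by
    have := card_hom_le H.exists_adj_induce_support hdeg (hU.card_dart_le hdeg)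
    rw [← hm, Nat.card_coe_set_eq, hℓ] at this
    exact (H.card_copyAlong_le_le_card_hom Γ).trans this
  have hE : Nat.card (H.support ↪ Fin n) = n.descFactorial ℓ := by
    rw [Nat.card_eq_fintype_card, Fintype.card_embedding_eq, Fintype.card_fin,
      ← Nat.card_eq_fintype_card, Nat.card_coe_set_eq, hℓ]
  rw [H.card_copies_div_card_copies, hE, ← Nat.cast_sub hkn.le]
  rcases (Nat.card {f : H.support ↪ Fin n // H.copyAlong f ≤ Γ}).eq_zero_or_pos with h0 | hpos
  · rw [h0, Nat.cast_zero, zero_div]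
    positivity
  obtain ⟨⟨f, hf⟩⟩ := (Nat.card_pos_iff.1 hpos).1
  have hℓk : ℓ ≤ k := hℓ ▸ hk ▸ ncard_support_le_of_copyAlong_le hf
  refine div_le_div₀ (by positivity) (by exact_mod_cast hhom)
    (pow_pos (Nat.cast_pos.2 (Nat.sub_pos_of_lt hkn)) ℓ) ?_
  exact_mod_cast (Nat.pow_le_pow_left (by omega) ℓ).trans (Nat.pow_sub_le_descFactorial n ℓ)

/-- Probability that a uniformly random copy of `H` in `K_n` is contained in a fixed copy
`Γ` of a graph with `k` vertices, maximum degree `d` and vertex cover number `τ`: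
if `H` has `ℓ` vertices and `m` connected components and is isomorphic to a subgraph of
`Γ`, then `P[H_U ⊆ Γ] ≤ (2τ)^m d^{ℓ-m} / (n-k)^ℓ`.  Copies of `H` in `K_n` are the
simple graphs on `Fin n` isomorphic to `H`, vertices of a graph are its support
(non-isolated vertices), and the probability is the ratio of the number of copies
contained in `Γ` to the total number of copies. -/
theorem prob_random_copy_subset {n k ℓ m d τ : ℕ} (Γ H : SimpleGraph (Fin n))
    (hk : Γ.support.ncard = k) (hkn : k < n)
    (hd : ∀ v, (Γ.neighborSet v).ncard ≤ d)
    (hτ : τ = sInf {c : ℕ | ∃ U : Finset (Fin n), U.card = c ∧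
      ∀ e ∈ Γ.edgeSet, ∃ v ∈ U, v ∈ e})
    (hℓ : H.support.ncard = ℓ)
    (hm : m = Nat.card (H.induce H.support).ConnectedComponent)
    (hiso : ∃ H₀ : SimpleGraph (Fin n), H₀ ≤ Γ ∧ Nonempty (H₀ ≃g H)) :
    (Nat.card {H' : SimpleGraph (Fin n) // Nonempty (H' ≃g H) ∧ H' ≤ Γ} : ℝ) /
      (Nat.card {H' : SimpleGraph (Fin n) // Nonempty (H' ≃g H)} : ℝ) ≤
    ((2 * τ : ℝ) ^ m * (d : ℝ) ^ (ℓ - m)) / ((n : ℝ) - (k : ℝ)) ^ ℓ :=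
  prob_random_copy_subset_general Γ H hk hkn hd hτ hℓ hm
end

section
/- For every ε > 0, every nonempty finite simple graph Γ can be decomposed into M = ⌈1/ε⌉ edge-disjoint subgraphs Γ₁,…,Γ_M (some possibly empty) such that for every ℓ ∈ {1,…,M}, τ(Γ_ℓ) · d_max(Γ_ℓ) ≤ 2 |e(Γ)| · d_max(Γ)^{1/M}, where τ denotes vertex cover number and d_max denotes maximum degree. -/
open SimpleGraph Finset

/-!
Put `θ = d_max(Γ) ^ (1 / M)` and give each edge the level `j < M` of its endpoint of larger
degree, i.e. the largest `j` with `θ ^ j ≤ deg`. The edges of level `j` are covered by the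
vertices of degree at least `θ ^ j`, of which there are at most `2 |e(Γ)| / θ ^ j` by the degree
sum, while every endpoint of such an edge has degree at most `θ ^ (j + 1)`. The product of the two
bounds is `2 |e(Γ)| θ`.
-/

noncomputable def degreeLevel (θ : ℝ) (M d : ℕ) : ℕ :=
  Nat.findGreatest (fun j => θ ^ j ≤ d) (M - 1)

section degreeLevel

variable {θ : ℝ} {M d : ℕ}

lemma degreeLevel_lt (hM : 1 ≤ M) : degreeLevel θ M d < M :=
  (Nat.findGreatest_le _).trans_lt (by omega)

lemma pow_degreeLevel_le (hd : 1 ≤ d) : θ ^ degreeLevel θ M d ≤ d :=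
  Nat.findGreatest_spec (P := fun j => θ ^ j ≤ d) (Nat.zero_le _) (by simpa using hd)

lemma le_pow_degreeLevel_succ (hM : 1 ≤ M) (hd : (d : ℝ) ≤ θ ^ M) :
    (d : ℝ) ≤ θ ^ (degreeLevel θ M d + 1) := by
  rcases (Nat.findGreatest_le (P := fun j => θ ^ j ≤ d) (M - 1)).lt_or_eq with hlt | heq
  · exact (not_le.mp <|
      Nat.findGreatest_is_greatest (P := fun j => θ ^ j ≤ d) (Nat.lt_succ_self _) hlt).le
  · rwa [degreeLevel, heq, Nat.sub_add_cancel hM]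

end degreeLevel

namespace SimpleGraph

variable {V : Type*} (G : SimpleGraph V)

def levelSubgraph (f : V → ℕ) (j : ℕ) : SimpleGraph V where
  Adj u v := G.Adj u v ∧ max (f u) (f v) = j
  symm := ⟨fun u v h => ⟨h.1.symm, max_comm (f u) (f v) ▸ h.2⟩⟩
  loopless := ⟨fun v h => G.loopless.irrefl v h.1⟩

variable (f : V → ℕ)

lemma levelSubgraph_le (j : ℕ) : G.levelSubgraph f j ≤ G := fun _ _ h => h.1

lemma edgeSet_eq_iUnion_levelSubgraph {M : ℕ} (hf : ∀ v, f v < M) :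
    G.edgeSet = ⋃ j : Fin M, (G.levelSubgraph f j).edgeSet := by
  ext e
  induction e using Sym2.ind with
  | _ u v =>
    simp only [mem_edgeSet, Set.mem_iUnion]
    exact ⟨fun h => ⟨⟨_, max_lt (hf u) (hf v)⟩, h, rfl⟩, fun ⟨_, h⟩ => h.1⟩

lemma disjoint_edgeSet_levelSubgraph {i j : ℕ} (hij : i ≠ j) :
    Disjoint (G.levelSubgraph f i).edgeSet (G.levelSubgraph f j).edgeSet := by
  rw [Set.disjoint_left]
  intro e
  induction e using Sym2.ind with
  | _ u v => exact fun hi hj => hij (hi.2.symm.trans hj.2)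

instance (j : ℕ) [DecidableRel G.Adj] : DecidableRel (G.levelSubgraph f j).Adj :=
  fun u v => inferInstanceAs (Decidable (G.Adj u v ∧ _))

variable [Fintype V] [DecidableRel G.Adj]

lemma ncard_neighborSet (v : V) : (G.neighborSet v).ncard = G.degree v := by
  rw [degree, neighborFinset_def, Set.ncard_eq_toFinset_card']

lemma ncard_edgeSet [DecidableEq V] : G.edgeSet.ncard = #G.edgeFinset := by
  rw [← coe_edgeFinset, Set.ncard_coe_finset]

lemma card_filter_le_degree_mul_le (t : ℝ) :
    (#{v | t ≤ G.degree v} : ℝ) * t ≤ 2 * #G.edgeFinset := by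
  have hsum : ∑ v, (G.degree v : ℝ) = 2 * #G.edgeFinset := by
    exact_mod_cast G.sum_degrees_eq_twice_card_edges
  calc (#{v | t ≤ G.degree v} : ℝ) * t
      ≤ ∑ v ∈ {v | t ≤ G.degree v}, (G.degree v : ℝ) := by
        simpa using card_nsmul_le_sum _ (fun v => (G.degree v : ℝ)) t (by simp)
    _ ≤ ∑ v, (G.degree v : ℝ) := sum_le_sum_of_subset_of_nonneg (subset_univ _) (by simp)
    _ = 2 * #G.edgeFinset := hsum

lemma exists_mem_of_mem_edgeSet_levelSubgraph {j : ℕ} {e : Sym2 V}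
    (he : e ∈ (G.levelSubgraph f j).edgeSet) : ∃ v ∈ e, f v = j ∧ 1 ≤ G.degree v := by
  induction e using Sym2.ind with
  | _ u v =>
    obtain ⟨hadj, hmax⟩ := he
    rcases max_choice (f u) (f v) with h | h
    · exact ⟨u, Sym2.mem_mk_left u v, h ▸ hmax, G.degree_pos_iff_exists_adj u |>.mpr ⟨v, hadj⟩⟩
    · exact ⟨v, Sym2.mem_mk_right u v, h ▸ hmax,
        G.degree_pos_iff_exists_adj v |>.mpr ⟨u, hadj.symm⟩⟩

variable {θ : ℝ} {M : ℕ}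

lemma degree_levelSubgraph_le (hθ : 0 ≤ θ) (hM : 1 ≤ M) (hdeg : ∀ v, (G.degree v : ℝ) ≤ θ ^ M)
    (j : ℕ) (x : V) :
    ((G.levelSubgraph (fun v => degreeLevel θ M (G.degree v)) j).degree x : ℝ) ≤ θ ^ (j + 1) := by
  set H := G.levelSubgraph (fun v => degreeLevel θ M (G.degree v)) j
  rcases (H.degree x).eq_zero_or_pos with h0 | hpos
  · rw [h0, Nat.cast_zero]
    positivity
  obtain ⟨y, hxy, hmax⟩ := (H.degree_pos_iff_exists_adj x).mp hpos
  have hx : 1 ≤ G.degree x := (G.degree_pos_iff_exists_adj x).mpr ⟨y, hxy⟩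
  have hθ1 : 1 ≤ θ :=
    (one_le_pow_iff_of_nonneg hθ (by omega)).mp
      ((by exact_mod_cast hx : (1 : ℝ) ≤ _).trans (hdeg x))
  calc (H.degree x : ℝ) ≤ G.degree x := by exact_mod_cast degree_le_of_le (G.levelSubgraph_le _ j)
    _ ≤ θ ^ (degreeLevel θ M (G.degree x) + 1) := le_pow_degreeLevel_succ hM (hdeg x)
    _ ≤ θ ^ (j + 1) := pow_le_pow_right₀ hθ1 (by simpa using hmax ▸ le_max_left _ _)

lemma coverNumber_mul_maxDegree_levelSubgraph_le (hθ : 0 ≤ θ) (hM : 1 ≤ M)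
    (hdeg : ∀ v, (G.degree v : ℝ) ≤ θ ^ M) (j : ℕ) :
    ((sInf {c : ℕ | ∃ U : Finset V, #U = c ∧
        ∀ e ∈ (G.levelSubgraph (fun v => degreeLevel θ M (G.degree v)) j).edgeSet,
          ∃ v ∈ U, v ∈ e} : ℕ) : ℝ) *
      ((univ.sup fun v =>
        ((G.levelSubgraph (fun v => degreeLevel θ M (G.degree v)) j).neighborSet v).ncard : ℕ) : ℝ)
      ≤ 2 * #G.edgeFinset * θ := by
  set H := G.levelSubgraph (fun v => degreeLevel θ M (G.degree v)) j
  set S : Finset V := {v | θ ^ j ≤ G.degree v}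
  have hcover : ∀ e ∈ H.edgeSet, ∃ v ∈ S, v ∈ e := by
    intro e he
    obtain ⟨v, hve, hlevel, hv⟩ := G.exists_mem_of_mem_edgeSet_levelSubgraph _ he
    exact ⟨v, by simpa [S, hlevel] using pow_degreeLevel_le (θ := θ) (M := M) hv, hve⟩
  have hτ : sInf {c : ℕ | ∃ U : Finset V, #U = c ∧ ∀ e ∈ H.edgeSet, ∃ v ∈ U, v ∈ e} ≤ #S :=
    Nat.sInf_le ⟨S, rfl, hcover⟩
  have hΔ : ((univ.sup fun v => (H.neighborSet v).ncard : ℕ) : ℝ) ≤ θ ^ (j + 1) := by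
    refine (Nat.cast_le.mpr (Finset.sup_le fun v _ => Nat.le_floor ?_)).trans
      (Nat.floor_le (by positivity))
    rw [H.ncard_neighborSet]
    exact G.degree_levelSubgraph_le hθ hM hdeg j v
  calc _ ≤ (#S : ℝ) * θ ^ (j + 1) := by gcongr
    _ = #S * θ ^ j * θ := by ring
    _ ≤ 2 * #G.edgeFinset * θ := mul_le_mul_of_nonneg_right (G.card_filter_le_degree_mul_le _) hθ

end SimpleGraph

theorem vcd_balanced_decomposition_general {n : ℕ} (Γ : SimpleGraph (Fin n))
    (ε : ℝ) (hε : 0 < ε) :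
    ∃ Γs : Fin ⌈1 / ε⌉₊ → SimpleGraph (Fin n),
      (∀ i, Γs i ≤ Γ) ∧
      (Γ.edgeSet = ⋃ i, (Γs i).edgeSet) ∧
      (∀ i j, i ≠ j → Disjoint (Γs i).edgeSet (Γs j).edgeSet) ∧
      ∀ i,
        ((sInf {c : ℕ | ∃ U : Finset (Fin n), U.card = c ∧
            ∀ e ∈ (Γs i).edgeSet, ∃ v ∈ U, v ∈ e} : ℕ) : ℝ) *
          ((Finset.univ.sup fun v => ((Γs i).neighborSet v).ncard : ℕ) : ℝ) ≤
        2 * (Γ.edgeSet.ncard : ℝ) *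
          ((Finset.univ.sup fun v => (Γ.neighborSet v).ncard : ℕ) : ℝ) ^
            ((1 : ℝ) / (⌈1 / ε⌉₊ : ℝ)) := by
  classical
  set M := ⌈1 / ε⌉₊
  set D := univ.sup fun v => (Γ.neighborSet v).ncard
  set θ := (D : ℝ) ^ ((1 : ℝ) / M)
  have hM : 1 ≤ M := Nat.ceil_pos.mpr (by positivity)
  have hθ : 0 ≤ θ := by positivity
  have hθM : θ ^ M = D := by
    simp only [θ, one_div]
    exact Real.rpow_inv_natCast_pow (Nat.cast_nonneg D) (by omega)
  have hdeg : ∀ v, (Γ.degree v : ℝ) ≤ θ ^ M := by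
    intro v
    rw [hθM, ← Γ.ncard_neighborSet]
    exact_mod_cast le_sup (f := fun v => (Γ.neighborSet v).ncard) (mem_univ v)
  set f := fun v => degreeLevel θ M (Γ.degree v)
  refine ⟨fun j => Γ.levelSubgraph f j, fun j => Γ.levelSubgraph_le f j,
    Γ.edgeSet_eq_iUnion_levelSubgraph f fun v => degreeLevel_lt hM,
    fun i j hij => Γ.disjoint_edgeSet_levelSubgraph f (Fin.val_injective.ne hij), fun j => ?_⟩
  rw [Γ.ncard_edgeSet]
  exact Γ.coverNumber_mul_maxDegree_levelSubgraph_le hθ hM hdeg j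

/-- For every `ε > 0`, every nonempty graph `Γ` decomposes into `M = ⌈1/ε⌉` edge-disjoint
subgraphs `Γ₁,…,Γ_M` (some possibly empty) with
`τ(Γ_ℓ)·d_max(Γ_ℓ) ≤ 2|e(Γ)|·d_max(Γ)^{1/M}` for every `ℓ`, where `τ` is the vertex
cover number and `d_max` the maximum degree. -/
theorem vcd_balanced_decomposition {n : ℕ} (Γ : SimpleGraph (Fin n))
    (hΓ : Γ.edgeSet.Nonempty) (ε : ℝ) (hε : 0 < ε) :
    ∃ Γs : Fin ⌈1 / ε⌉₊ → SimpleGraph (Fin n),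
      (∀ i, Γs i ≤ Γ) ∧
      (Γ.edgeSet = ⋃ i, (Γs i).edgeSet) ∧
      (∀ i j, i ≠ j → Disjoint (Γs i).edgeSet (Γs j).edgeSet) ∧
      ∀ i,
        ((sInf {c : ℕ | ∃ U : Finset (Fin n), U.card = c ∧
            ∀ e ∈ (Γs i).edgeSet, ∃ v ∈ U, v ∈ e} : ℕ) : ℝ) *
          ((Finset.univ.sup fun v => ((Γs i).neighborSet v).ncard : ℕ) : ℝ) ≤
        2 * (Γ.edgeSet.ncard : ℝ) *
          ((Finset.univ.sup fun v => (Γ.neighborSet v).ncard : ℕ) : ℝ) ^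
            ((1 : ℝ) / (⌈1 / ε⌉₊ : ℝ)) :=
  vcd_balanced_decomposition_general Γ ε hε
end

section
/- Let Γ be a finite simple graph, and let Γ = Γ₁ ∪ ⋯ ∪ Γ_M be a decomposition into edge-disjoint subgraphs. In the construction of the vcd-balanced decomposition (as in the previous statement), for each i, d_max(Γᵢ) ≤ d_max(Γ)^{(M−i+1)/M}: every vertex of Γᵢ either lies in the cover set Sᵢ (so its degree in Γ, hence in Γᵢ, is below the threshold d_max(Γ)^{(M−i+1)/M}), or all its incident edges were assigned to an earlier part, contradicting membership in Γᵢ. -/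
open SimpleGraph

/-!
A vertex of the `i`-th part that already lies in an earlier cover set `S j` has no edges left
for this part: each of its edges went to `Γs j` or to a part before it. Otherwise `v` was not
picked by any earlier cover set, so (for `i > 0`) its `Γ`-degree is below the threshold of the
previous step, `d^{(M-i)/M}`; for `i = 0` the bound `d` holds trivially. In both cases the
degree in `Γs i ≤ Γ` is bounded by the degree in `Γ`.
-/

section GreedyEdgeAssignment

variable {ι V : Type*} [Preorder ι]

def IsGreedyEdgeAssignment (Γ : SimpleGraph V) (S : ι → Finset V) (Γs : ι → SimpleGraph V) :
    Prop :=
  ∀ i, (Γs i).edgeSet = {e | e ∈ Γ.edgeSet ∧ (∃ v ∈ S i, v ∈ e) ∧ ∀ j, j < i → e ∉ (Γs j).edgeSet}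

namespace IsGreedyEdgeAssignment

variable {Γ : SimpleGraph V} {S : ι → Finset V} {Γs : ι → SimpleGraph V}

theorem le (hE : IsGreedyEdgeAssignment Γ S Γs) (i : ι) : Γs i ≤ Γ :=
  edgeSet_subset_edgeSet.mp fun e he => by
    rw [hE i] at he
    exact he.1

theorem mem_edgeSet_of_mem_cover (hE : IsGreedyEdgeAssignment Γ S Γs) {j : ι} {v w : V}
    (hv : v ∈ S j) (hvw : Γ.Adj v w) : ∃ k ≤ j, s(v, w) ∈ (Γs k).edgeSet := by
  by_cases hearlier : ∃ k < j, s(v, w) ∈ (Γs k).edgeSet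
  · obtain ⟨k, hkj, hk⟩ := hearlier
    exact ⟨k, hkj.le, hk⟩
  · push Not at hearlier
    refine ⟨j, le_rfl, ?_⟩
    rw [hE j]
    exact ⟨hvw, ⟨v, hv, Sym2.mem_mk_left v w⟩, hearlier⟩

theorem neighborSet_eq_empty_of_mem_cover (hE : IsGreedyEdgeAssignment Γ S Γs) {i j : ι}
    (hji : j < i) {v : V} (hv : v ∈ S j) : (Γs i).neighborSet v = ∅ := by
  refine Set.eq_empty_of_forall_notMem fun w hw => ?_
  have hvw : s(v, w) ∈ (Γs i).edgeSet := hw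
  obtain ⟨k, hkj, hk⟩ := hE.mem_edgeSet_of_mem_cover hv ((hE.le i) hw)
  rw [hE i] at hvw
  exact hvw.2.2 k (hkj.trans_lt hji) hk

end IsGreedyEdgeAssignment

theorem lt_threshold_of_forall_notMem_cover {S : ι → Finset V} {t : ι → ℝ} {f : V → ℝ}
    (hS : ∀ i v, v ∈ S i ↔ t i ≤ f v ∧ ∀ j, j < i → v ∉ S j) {i : ι} {v : V}
    (hv : ∀ j ≤ i, v ∉ S j) : f v < t i := by
  by_contra! hle
  exact hv i le_rfl ((hS i v).mpr ⟨hle, fun j hj => hv j hj.le⟩)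

end GreedyEdgeAssignment

theorem ncard_neighborSet_le_rpow_of_forall_notMem_cover {n M d : ℕ} {Γ : SimpleGraph (Fin n)}
    (hd : ∀ v, (Γ.neighborSet v).ncard ≤ d) {S : Fin M → Finset (Fin n)}
    (hS : ∀ (i : Fin M) (v : Fin n), v ∈ S i ↔
      ((d : ℝ) ^ (((M : ℝ) - ((i : ℕ) + 1)) / (M : ℝ)) ≤ ((Γ.neighborSet v).ncard : ℝ) ∧
        ∀ j, j < i → v ∉ S j))
    {i : Fin M} {v : Fin n} (hv : ∀ j < i, v ∉ S j) :
    ((Γ.neighborSet v).ncard : ℝ) ≤ (d : ℝ) ^ (((M : ℝ) - (i : ℕ)) / (M : ℝ)) := by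
  by_cases hi : (i : ℕ) = 0
  · have hM : (M : ℝ) ≠ 0 := by exact_mod_cast i.pos.ne'
    rw [hi, Nat.cast_zero, sub_zero, div_self hM, Real.rpow_one]
    exact_mod_cast hd v
  · let j : Fin M := ⟨(i : ℕ) - 1, by omega⟩
    have hji : j < i := Fin.lt_def.mpr (by simp only [j]; omega)
    have hj : ((j : ℕ) : ℝ) + 1 = ((i : ℕ) : ℝ) := by
      rw [← Nat.cast_succ]
      exact congrArg _ (by simp only [j]; omega)
    rw [← hj]
    exact (lt_threshold_of_forall_notMem_cover hS fun k hk => hv k (hk.trans_lt hji)).le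

theorem decomposition_maxDegree_bound_general {n M d : ℕ}
    (Γ : SimpleGraph (Fin n)) (hd : ∀ v, (Γ.neighborSet v).ncard ≤ d)
    (S : Fin M → Finset (Fin n)) (Γs : Fin M → SimpleGraph (Fin n))
    (hS : ∀ (i : Fin M) (v : Fin n), v ∈ S i ↔
      ((d : ℝ) ^ (((M : ℝ) - ((i : ℕ) + 1)) / (M : ℝ)) ≤ ((Γ.neighborSet v).ncard : ℝ) ∧
        ∀ j, j < i → v ∉ S j))
    (hE : ∀ i : Fin M, (Γs i).edgeSet =
      {e | e ∈ Γ.edgeSet ∧ (∃ v ∈ S i, v ∈ e) ∧ ∀ j, j < i → e ∉ (Γs j).edgeSet}) :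
    ∀ (i : Fin M) (v : Fin n),
      (((Γs i).neighborSet v).ncard : ℝ) ≤ (d : ℝ) ^ (((M : ℝ) - (i : ℕ)) / (M : ℝ)) := by
  intro i v
  have hE : IsGreedyEdgeAssignment Γ S Γs := hE
  by_cases hcovered : ∃ j < i, v ∈ S j
  · obtain ⟨j, hji, hv⟩ := hcovered
    rw [hE.neighborSet_eq_empty_of_mem_cover hji hv, Set.ncard_empty, Nat.cast_zero]
    exact Real.rpow_nonneg (Nat.cast_nonneg d) _
  · push Not at hcovered
    calc (((Γs i).neighborSet v).ncard : ℝ) ≤ (Γ.neighborSet v).ncard := by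
          exact_mod_cast Set.ncard_le_ncard (neighborSet_mono (hE.le i) v) (Set.toFinite _)
      _ ≤ _ := ncard_neighborSet_le_rpow_of_forall_notMem_cover hd hS hcovered

/-- In the vcd-balanced decomposition construction (parts indexed by `i : Fin M`,
corresponding to the paper's index `i+1`): `S i` is the set of vertices of `Γ`-degree at
least `d^{(M-(i+1))/M}` not already covered by an earlier part, and the edge set of
`Γs i` consists of the `Γ`-edges meeting `S i` that do not belong to an earlier part.
Then the maximum degree of each part satisfies `d_max(Γs i) ≤ d^{(M-i)/M}`. -/
theorem decomposition_maxDegree_bound {n M d : ℕ} (hM : 0 < M)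
    (Γ : SimpleGraph (Fin n)) (hd : ∀ v, (Γ.neighborSet v).ncard ≤ d)
    (S : Fin M → Finset (Fin n)) (Γs : Fin M → SimpleGraph (Fin n))
    (hS : ∀ (i : Fin M) (v : Fin n), v ∈ S i ↔
      ((d : ℝ) ^ (((M : ℝ) - ((i : ℕ) + 1)) / (M : ℝ)) ≤ ((Γ.neighborSet v).ncard : ℝ) ∧
        ∀ j, j < i → v ∉ S j))
    (hE : ∀ i : Fin M, (Γs i).edgeSet =
      {e | e ∈ Γ.edgeSet ∧ (∃ v ∈ S i, v ∈ e) ∧ ∀ j, j < i → e ∉ (Γs j).edgeSet}) :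
    ∀ (i : Fin M) (v : Fin n),
      (((Γs i).neighborSet v).ncard : ℝ) ≤ (d : ℝ) ^ (((M : ℝ) - (i : ℕ)) / (M : ℝ)) :=
  decomposition_maxDegree_bound_general Γ hd S Γs hS hE
end
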